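/- Let $y_0 \in (0, 1/2)$ and $\theta > 0$. The point $(Q_1, Q_2, \Lambda, u) = \left(0,\; \frac{2\sqrt{y_0}}{3^{1/4}\sqrt{\theta}},\; \frac{\log 3}{2},\; \log\sqrt{1-y_0^2}\right)$ is a steady state of the system: $\frac{dQ_i}{ds} = -\frac{e^u Q_i \zeta_i}{y_0 e^{\Lambda}\sqrt{\zeta_i^2+1} + \zeta_i e^u}$ for $i=1,2$; $e^{-2\Lambda}(2\Lambda_s - 1) + 1 = \frac{\theta}{2}\sum_{i=1,2} \frac{Q_i^2(\zeta_i^2+1)}{|\zeta_i e^u + y_0 e^{\Lambda}\sqrt{\zeta_i^2+1}|}$; $e^{-2\Lambda}(2u_s + 3) - 1 = \frac{\theta}{2}\sum_{i=1,2}\frac{Q_i^2 \zeta_i^2}{|\zeta_i e^u + y_0 e^{\Lambda}\sqrt{\zeta_i^2+1}|}$, where $\zeta_1 < \zeta_2$ are the two roots of $e^u\sqrt{\zeta^2+1} + y_0\zeta e^{\Lambda} = \sqrt{1-y_0^2}$. At this steady state $\zeta_2 = 0$ and $\zeta_1 = -\frac{2y_0\sqrt{3(1-y_0^2)}}{1-4y_0^2}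 < 0$. -/

import Mathlib

/-!
With `e^u = √(1 - y0²)` and `e^Λ = √3`, the constraint reads `A √(ζ² + 1) + B ζ = A` with
`A = √(1 - y0²)` and `B = √3 y0`. Its roots are `ζ = 0` and `ζ = -2AB / (A² - B²)`, the latter
because `(A² - B²)² + (2AB)² = (A² + B²)²`; since `A² - B² = 1 - 4y0²` this is the stated `ζ₁`.
As `Q₁ = 0` and `ζ₂ = 0`, only the `ζ₂`-term survives in the two sums, and it is
`(θ/2) Q₂² / (√3 y0) = 2/3 = 1 - e^{-2Λ}` in the first and `0 = 3e^{-2Λ} - 1` in the second.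
-/

open Real

namespace Real

theorem exp_log_div_two {x : ℝ} (hx : 0 < x) : exp (log x / 2) = √x := by
  rw [sqrt_eq_rpow, rpow_def_of_pos hx, div_eq_mul_one_div]

theorem rpow_one_div_four_sq {x : ℝ} (hx : 0 ≤ x) : (x ^ (1 / 4 : ℝ)) ^ 2 = √x := by
  rw [sqrt_eq_rpow, ← rpow_natCast, ← rpow_mul hx]
  norm_num

end Real

/-- The nonzero root of `A √(ζ² + 1) + B ζ = A`. -/
noncomputable def constraintRoot (A B : ℝ) : ℝ := -(2 * A * B / (A ^ 2 - B ^ 2))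

section constraintRoot

variable {A B : ℝ}

theorem constraintRoot_neg (hAB : 0 < A * B) (hBA : B ^ 2 < A ^ 2) : constraintRoot A B < 0 := by
  have : 0 < 2 * A * B / (A ^ 2 - B ^ 2) := div_pos (by linarith) (by linarith)
  unfold constraintRoot
  linarith

theorem sqrt_constraintRoot_sq_add_one (hBA : B ^ 2 < A ^ 2) :
    √(constraintRoot A B ^ 2 + 1) = (A ^ 2 + B ^ 2) / (A ^ 2 - B ^ 2) := by
  have hne : A ^ 2 - B ^ 2 ≠ 0 := by linarith
  rw [sqrt_eq_iff_mul_self_eq_of_pos (div_pos (by nlinarith [sq_nonneg B]) (by linarith)), constraintRoot]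
  field_simp
  ring

theorem constraintRoot_isRoot (hBA : B ^ 2 < A ^ 2) :
    A * √(constraintRoot A B ^ 2 + 1) + B * constraintRoot A B = A := by
  have hne : A ^ 2 - B ^ 2 ≠ 0 := by linarith
  rw [sqrt_constraintRoot_sq_add_one hBA, constraintRoot]
  field_simp
  ring

end constraintRoot

theorem stmt_7 (y0 θ Q₁ Q₂ Λ u ζ₁ ζ₂ : ℝ)
    (hy0 : 0 < y0 ∧ y0 < 1/2) (hθ : 0 < θ)
    (hQ₁ : Q₁ = 0)
    (hQ₂ : Q₂ = 2 * Real.sqrt y0 / ((3:ℝ) ^ ((1:ℝ)/4) * Real.sqrt θ))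
    (hΛ : Λ = Real.log 3 / 2)
    (hu : u = Real.log (Real.sqrt (1 - y0^2)))
    (hζ₁ : ζ₁ = -(2 * y0 * Real.sqrt (3 * (1 - y0^2)) / (1 - 4*y0^2)))
    (hζ₂ : ζ₂ = 0) :
    -- ζ₁ < ζ₂ = 0 and both are roots of the constraint equation
    (ζ₁ < 0 ∧ ζ₁ < ζ₂) ∧
    (Real.exp u * Real.sqrt (ζ₁^2 + 1) + y0 * ζ₁ * Real.exp Λ
        = Real.sqrt (1 - y0^2)) ∧
    (Real.exp u * Real.sqrt (ζ₂^2 + 1) + y0 * ζ₂ * Real.exp Λ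
        = Real.sqrt (1 - y0^2)) ∧
    -- steady-state conditions
    Q₁ * ζ₁ = 0 ∧ Q₂ * ζ₂ = 0 ∧
    (1 - Real.exp (-(2*Λ))
      = θ/2 * (Q₁^2 * (ζ₁^2 + 1)
            / |ζ₁ * Real.exp u + y0 * Real.exp Λ * Real.sqrt (ζ₁^2 + 1)|
          + Q₂^2 * (ζ₂^2 + 1)
            / |ζ₂ * Real.exp u + y0 * Real.exp Λ * Real.sqrt (ζ₂^2 + 1)|)) ∧
    (3 * Real.exp (-(2*Λ)) - 1
      = θ/2 * (Q₁^2 * ζ₁^2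
            / |ζ₁ * Real.exp u + y0 * Real.exp Λ * Real.sqrt (ζ₁^2 + 1)|
          + Q₂^2 * ζ₂^2
            / |ζ₂ * Real.exp u + y0 * Real.exp Λ * Real.sqrt (ζ₂^2 + 1)|)) := by
  obtain ⟨hy0, hy0_half⟩ := hy0
  have h3 : √3 ^ 2 = 3 := sq_sqrt (by norm_num)
  have hA : √(1 - y0 ^ 2) ^ 2 = 1 - y0 ^ 2 := sq_sqrt (by nlinarith)
  have hexpu : exp u = √(1 - y0 ^ 2) := by rw [hu, exp_log (sqrt_pos.2 (by nlinarith))]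
  have hexpΛ : exp Λ = √3 := hΛ ▸ exp_log_div_two three_pos
  have hexp2Λ : exp (-(2 * Λ)) = 1 / 3 := by
    rw [exp_neg, show 2 * Λ = Λ + Λ by ring, exp_add, hexpΛ, mul_self_sqrt (by norm_num)]
    norm_num
  have hBA : (y0 * exp Λ) ^ 2 < exp u ^ 2 := by rw [hexpu, hexpΛ, mul_pow, h3, hA]; nlinarith
  have hζ₁_eq : ζ₁ = constraintRoot (exp u) (y0 * exp Λ) := by
    rw [hζ₁, constraintRoot, hexpu, hexpΛ, mul_pow, h3, hA, sqrt_mul (by norm_num)]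
    ring_nf
  have hQ₂sq : Q₂ ^ 2 = 4 * y0 / (√3 * θ) := by
    rw [hQ₂, div_pow, mul_pow, mul_pow, rpow_one_div_four_sq (by norm_num), sq_sqrt hy0.le,
      sq_sqrt hθ.le]
    ring
  have hζ₁_neg : ζ₁ < 0 :=
    hζ₁_eq ▸ constraintRoot_neg (mul_pos (exp_pos u) (mul_pos hy0 (exp_pos Λ))) hBA
  subst hQ₁ hζ₂
  refine ⟨⟨hζ₁_neg, hζ₁_neg⟩, ?_, by simp [hexpu], by ring, by ring, ?_, by simp [hexp2Λ]⟩
  · rw [← hexpu, hζ₁_eq]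
    linear_combination constraintRoot_isRoot hBA
  · rw [hexp2Λ, hexpu, hexpΛ, hQ₂sq]
    simp only [zero_pow two_ne_zero, zero_mul, zero_div, zero_add, mul_one, sqrt_one,
      abs_of_pos (mul_pos hy0 (sqrt_pos.2 three_pos))]
    field_simp
    linear_combination 4 * h3
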